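/- For the stochastic mass action system with species $(A,B,C)$ and reactions $A+B\to 0$, $B\to A+C$, $C\to 2B$, $2B\to C$, if $X_1(0) - X_2(0) - 2X_3(0) < 0$ then no extinction set for any of the four reactions is reachable from $X(0)$; that is, no extinction event can occur. -/

import Mathlib

open Finset

/-- A state: copy-numbers of the `d` species. -/
abbrev State (d : ℕ) := Fin d → ℕ

/-- A reaction: a pair (source complex, product complex). -/
abbrev Rxn (d : ℕ) := (State d) × (State d)

/-- A reaction with source `y` is active at `x` iff `x ≥ y` componentwise. -/
def active {d : ℕ} (y x : State d) : Prop := ∀ i, y i ≤ x i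

/-- One-step reachability: from `x` jump to `x + y' - y` whenever `x ≥ y` for a reaction `y → y'`. -/
def step {d : ℕ} (R : List (Rxn d)) (x x' : State d) : Prop :=
  ∃ r ∈ R, active r.1 x ∧ ∀ i, x' i + r.1 i = x i + r.2 i

/-- Reachability: reflexive-transitive closure of one-step reachability. -/
def reach {d : ℕ} (R : List (Rxn d)) : State d → State d → Prop :=
  Relation.ReflTransGen (step R)

/-- A set is closed if no state outside it is reachable from inside it. -/
def closedSet {d : ℕ} (R : List (Rxn d)) (Γ : Set (State d)) : Prop :=
  ∀ x ∈ Γ, ∀ x', reach R x x' → x' ∈ Γ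

/-- An extinction set for a reaction: a closed set on which the reaction is never active. -/
def extinctionSet {d : ℕ} (R : List (Rxn d)) (r : Rxn d) (Γ : Set (State d)) : Prop :=
  closedSet R Γ ∧ ∀ x ∈ Γ, ¬ active r.1 x

/-- No extinction set for `r` is reachable from `x`. -/
def noExtSetReachable {d : ℕ} (R : List (Rxn d)) (r : Rxn d) (x : State d) : Prop :=
  ∀ Γ : Set (State d), extinctionSet R r Γ → ∀ x' ∈ Γ, ¬ reach R x x'

/-- The network A+B → 0, B → A+C, C → 2B, 2B → C. -/
def N3 : List (Rxn 3) :=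
  [(![1,1,0], ![0,0,0]), (![0,1,0], ![1,0,1]), (![0,0,1], ![0,2,0]), (![0,2,0], ![0,0,1])]

/-
The quantity `A - B - 2C` is conserved by all four reactions. While it is negative, `B` or `C`
is present, so firing `B → A + C` if `C` is absent, then `C → 2B`, then `B → A + C` produces a
state containing both `A` and `B`; hence no closed set avoiding `A + B` is reachable.
The other three reactions inherit this: the source of `B → A + C` lies below `A + B`, and each
of `C → 2B`, `2B → C` has its source among the products of the previous one.
-/

section Network

variable {d : ℕ} {R : List (Rxn d)}

-- Because of truncated subtraction this is the result of firing `r` only when `r.1 ≤ x`.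
def fire (r : Rxn d) (x : State d) : State d := fun i => x i - r.1 i + r.2 i

lemma reach_fire {r : Rxn d} {x : State d} (hr : r ∈ R) (hx : active r.1 x) :
    reach R x (fire r x) :=
  Relation.ReflTransGen.single ⟨r, hr, hx, fun i => by have := hx i; simp only [fire]; omega⟩

lemma reach_sum_mul_eq (w : Fin d → ℤ)
    (hw : ∀ r ∈ R, ∑ i, w i * r.1 i = ∑ i, w i * r.2 i) {x x' : State d} (h : reach R x x') :
    ∑ i, w i * x' i = ∑ i, w i * x i := by
  induction h with
  | refl => rfl
  | @tail y z _ hstep ih =>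
    obtain ⟨r, hr, -, heq⟩ := hstep
    have hpoint : ∀ i, w i * (z i : ℤ) = w i * y i + w i * r.2 i - w i * r.1 i := fun i => by
      have := congrArg (fun n : ℕ => (n : ℤ)) (heq i)
      push_cast at this
      linear_combination w i * this
    rw [← ih, Finset.sum_congr rfl fun i _ => hpoint i, Finset.sum_sub_distrib,
      Finset.sum_add_distrib, hw r hr, add_sub_cancel_right]

lemma noExtSetReachable_of_forall_reach_active {r : Rxn d} {x : State d}
    (h : ∀ y, reach R x y → ∃ z, reach R y z ∧ active r.1 z) : noExtSetReachable R r x := by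
  intro Γ ⟨hclosed, hinactive⟩ y hy hxy
  obtain ⟨z, hyz, hz⟩ := h y hxy
  exact hinactive z (hclosed y hy z hyz) hz

lemma noExtSetReachable.of_source_le {r r' : Rxn d} {x : State d} (hle : r.1 ≤ r'.1)
    (h : noExtSetReachable R r' x) : noExtSetReachable R r x :=
  fun Γ ⟨hclosed, hinactive⟩ =>
    h Γ ⟨hclosed, fun y hy hy' => hinactive y hy (le_trans hle hy')⟩

lemma noExtSetReachable.of_source_le_products {r r' : Rxn d} {x : State d} (hr : r ∈ R)
    (hle : r'.1 ≤ r.2) (h : noExtSetReachable R r x) : noExtSetReachable R r' x :=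
  fun Γ ⟨hclosed, hinactive⟩ => h Γ ⟨hclosed, fun y hy hry =>
    hinactive (fire r y) (hclosed y hy _ (reach_fire hr hry))
      fun i => (hle i).trans (Nat.le_add_left _ _)⟩

end Network

lemma reach_N3_invariant {x x' : State 3} (h : reach N3 x x') :
    (x' 0 : ℤ) - x' 1 - 2 * x' 2 = (x 0 : ℤ) - x 1 - 2 * x 2 := by
  have hw : ∀ r ∈ N3, ∑ i, ![1, -1, -2] i * (r.1 i : ℤ) = ∑ i, ![1, -1, -2] i * (r.2 i : ℤ) := by
    simp [N3, Fin.sum_univ_three]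
  have := reach_sum_mul_eq _ hw h
  simp [Fin.sum_univ_three] at this
  linarith

lemma exists_reach_active_A_add_B {x : State 3} (hx : (x 0 : ℤ) - x 1 - 2 * x 2 < 0) :
    ∃ z, reach N3 x z ∧ active ![1, 1, 0] z := by
  have hB : (![0, 1, 0], ![1, 0, 1]) ∈ N3 := by simp [N3]
  have hC : (![0, 0, 1], ![0, 2, 0]) ∈ N3 := by simp [N3]
  obtain ⟨y, hxy, hy⟩ : ∃ y, reach N3 x y ∧ 1 ≤ y 2 := by
    by_cases h : 1 ≤ x 2
    · exact ⟨x, Relation.ReflTransGen.refl, h⟩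
    · refine ⟨_, reach_fire hB ?_, by simp [fire]⟩
      simp [active, Fin.forall_fin_succ]
      omega
  have hyC : reach N3 y (fire _ y) := reach_fire hC (by simp [active, Fin.forall_fin_succ, hy])
  refine ⟨_, hxy.trans (hyC.trans (reach_fire hB ?_)), ?_⟩
  · simp [active, Fin.forall_fin_succ, fire]
  · simp [active, Fin.forall_fin_succ, fire]

/-- If `x₁ - x₂ - 2x₃ < 0` initially, then no extinction set for any of the four reactions is
reachable: no extinction event can occur. -/
theorem no_extinction_N3 (x0 : State 3)
    (h0 : (x0 0 : ℤ) - (x0 1 : ℤ) - 2 * (x0 2 : ℤ) < 0) :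
    ∀ r ∈ N3, noExtSetReachable N3 r x0 := by
  have hAB : noExtSetReachable N3 (![1, 1, 0], ![0, 0, 0]) x0 :=
    noExtSetReachable_of_forall_reach_active fun y hy =>
      exists_reach_active_A_add_B (by rw [reach_N3_invariant hy]; exact h0)
  have hB : noExtSetReachable N3 (![0, 1, 0], ![1, 0, 1]) x0 :=
    hAB.of_source_le (by simp [Pi.le_def, Fin.forall_fin_succ])
  have hC : noExtSetReachable N3 (![0, 0, 1], ![0, 2, 0]) x0 :=
    hB.of_source_le_products (by simp [N3]) (by simp [Pi.le_def, Fin.forall_fin_succ])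
  have h2B : noExtSetReachable N3 (![0, 2, 0], ![0, 0, 1]) x0 :=
    hC.of_source_le_products (by simp [N3]) le_rfl
  simp only [N3, List.mem_cons, List.not_mem_nil, or_false]
  rintro r (rfl | rfl | rfl | rfl) <;> assumption
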